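/- Let u = (u₁, u₂) : [0,∞) → ℝ² be continuous with u(0) = 0, with each uⱼ of locally bounded variation, and suppose the signed measures satisfy (u₁ + u₂) du₂ ≤ 0 and (u₁ - u₂) du₁ ≤ 0 (as Lebesgue–Stieltjes measures). Then u ≡ 0. -/

import Mathlib

open Set MeasureTheory Filter Topology

/-! If `‖u T‖ = r > 0`, let `t₀` be the first time the sup norm `‖u‖` reaches `r`; some
coordinate of `u t₀` then equals `±r`. Where `u₁ + u₂ > 0` the inequality `(u₁ + u₂) du₂ ≤ 0` makes
`u₂` nonincreasing, and where `u₁ + u₂ < 0` nondecreasing; likewise `u₁ - u₂` controls `u₁`.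
Applied just before `t₀`, these forbid each of the four ways of reaching the boundary of the square
`[-r, r]²` from its interior. -/

theorem MeasureTheory.withDensity_le_withDensity_of_le {X : Type*} [MeasurableSpace X]
    {μ ν : Measure X} (hμν : μ ≤ ν) (f : X → ENNReal) :
    μ.withDensity f ≤ ν.withDensity f := by
  rw [Measure.le_iff]
  intro s hs
  rw [withDensity_apply _ hs, withDensity_apply _ hs]
  exact lintegral_mono' (Measure.restrict_mono subset_rfl hμν) le_rfl

-- Weighting by `1 / v` undoes the weighting by `v`.
theorem MeasureTheory.restrict_le_restrict_of_forall_setIntegral_le {X : Type*}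
    [TopologicalSpace X] [MeasurableSpace X] [OpensMeasurableSpace X] {μ ν : Measure X}
    [IsFiniteMeasureOnCompacts μ] [IsFiniteMeasureOnCompacts ν] {K : Set X} {v : X → ℝ}
    (hK : IsCompact K) (hKm : MeasurableSet K) (hv : Continuous v) (hpos : ∀ x ∈ K, 0 < v x)
    (h : ∀ B, MeasurableSet B → B ⊆ K → ∫ x in B, v x ∂μ ≤ ∫ x in B, v x ∂ν) :
    μ.restrict K ≤ ν.restrict K := by
  set g : X → ENNReal := fun x => ENNReal.ofReal (v x)
  have hg : Measurable g := hv.measurable.ennreal_ofReal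
  have hweighted : (μ.restrict K).withDensity g ≤ (ν.restrict K).withDensity g := by
    rw [Measure.le_iff]
    intro s hs
    have hsK : MeasurableSet (s ∩ K) := hs.inter hKm
    have hnonneg : ∀ κ : Measure X, 0 ≤ᵐ[κ.restrict (s ∩ K)] v := fun κ =>
      (ae_restrict_iff' hsK).2 (ae_of_all _ fun x hx => (hpos x hx.2).le)
    have hint : ∀ κ : Measure X, [IsFiniteMeasureOnCompacts κ] → IntegrableOn v (s ∩ K) κ :=
      fun κ _ => (hv.continuousOn.integrableOn_compact' hK hKm).mono_set inter_subset_right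
    rw [withDensity_apply _ hs, withDensity_apply _ hs, Measure.restrict_restrict hs,
      Measure.restrict_restrict hs, ← ofReal_integral_eq_lintegral_ofReal (hint μ) (hnonneg μ),
      ← ofReal_integral_eq_lintegral_ofReal (hint ν) (hnonneg ν)]
    exact ENNReal.ofReal_le_ofReal (h _ hsK inter_subset_right)
  have hunweight : ∀ κ : Measure X,
      ((κ.restrict K).withDensity g).withDensity (fun x => (g x)⁻¹) = κ.restrict K := fun κ =>
    withDensity_inv_same hg
      ((ae_restrict_iff' hKm).2 (ae_of_all _ fun x hx => (ENNReal.ofReal_pos.2 (hpos x hx)).ne'))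
      (ae_of_all _ fun _ => ENNReal.ofReal_ne_top)
  rw [← hunweight μ, ← hunweight ν]
  exact withDensity_le_withDensity_of_le hweighted _

namespace StieltjesFunction

variable (p q : StieltjesFunction ℝ) {v : ℝ → ℝ}

theorem antitoneOn_sub_of_forall_setIntegral_le (hv : Continuous v) {a b : ℝ}
    (hpos : ∀ t ∈ Icc a b, 0 < v t)
    (h : ∀ B, MeasurableSet B → B ⊆ Icc a b →
      ∫ t in B, v t ∂p.measure ≤ ∫ t in B, v t ∂q.measure) :
    AntitoneOn (fun t => p t - q t) (Icc a b) := by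
  intro x hx y hy hxy
  have hsub : Ioc x y ⊆ Icc a b := Ioc_subset_Icc_self.trans (Icc_subset_Icc hx.1 hy.2)
  have hle : p.measure (Ioc x y) ≤ q.measure (Ioc x y) := by
    rw [← Measure.restrict_eq_self p.measure hsub, ← Measure.restrict_eq_self q.measure hsub]
    exact restrict_le_restrict_of_forall_setIntegral_le isCompact_Icc measurableSet_Icc hv hpos h _
  rw [measure_Ioc, measure_Ioc,
    ENNReal.ofReal_le_ofReal_iff (sub_nonneg.2 (q.mono hxy))] at hle
  linarith

theorem eventually_sub_le_of_forall_setIntegral_le (hv : Continuous v) {S : Set ℝ} {t₀ : ℝ}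
    (hS : S ∈ 𝓝 t₀) (hv₀ : 0 < v t₀)
    (h : ∀ B, MeasurableSet B → B ⊆ S → ∫ t in B, v t ∂p.measure ≤ ∫ t in B, v t ∂q.measure) :
    ∀ᶠ a in 𝓝[≤] t₀, p t₀ - q t₀ ≤ p a - q a := by
  have hgood : S ∩ {t | 0 < v t} ∈ 𝓝[≤] t₀ :=
    nhdsWithin_le_nhds (inter_mem hS ((isOpen_lt continuous_const hv).mem_nhds hv₀))
  obtain ⟨l, hl, hlS⟩ := mem_nhdsLE_iff_exists_Icc_subset.1 hgood
  have hanti := antitoneOn_sub_of_forall_setIntegral_le p q hv (fun t ht => (hlS ht).2)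
    fun B hB hBS => h B hB (hBS.trans (hlS.trans inter_subset_left))
  filter_upwards [Icc_mem_nhdsLE hl] with a ha
  exact hanti ha (right_mem_Icc.2 hl.le) ha.2

theorem eventually_le_sub_of_forall_setIntegral_le (hv : Continuous v) {S : Set ℝ} {t₀ : ℝ}
    (hS : S ∈ 𝓝 t₀) (hv₀ : v t₀ < 0)
    (h : ∀ B, MeasurableSet B → B ⊆ S → ∫ t in B, v t ∂p.measure ≤ ∫ t in B, v t ∂q.measure) :
    ∀ᶠ a in 𝓝[≤] t₀, p a - q a ≤ p t₀ - q t₀ := by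
  have hneg := eventually_sub_le_of_forall_setIntegral_le q p (v := fun t => -v t) hv.neg hS
    (neg_pos.2 hv₀)
    fun B hB hBS => by simpa only [integral_neg, neg_le_neg_iff] using h B hB hBS
  filter_upwards [hneg] with a ha
  linarith

theorem sub_lt_of_forall_setIntegral_le (hv : Continuous v) {S : Set ℝ} {t₀ r : ℝ}
    (hS : S ∈ 𝓝 t₀) (hv₀ : 0 < v t₀)
    (h : ∀ B, MeasurableSet B → B ⊆ S → ∫ t in B, v t ∂p.measure ≤ ∫ t in B, v t ∂q.measure)
    (hlt : ∀ᶠ s in 𝓝[<] t₀, p s - q s < r) :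
    p t₀ - q t₀ < r := by
  obtain ⟨a, hle, ha⟩ := (((eventually_sub_le_of_forall_setIntegral_le p q hv hS hv₀ h).filter_mono
    (nhdsWithin_mono _ Iio_subset_Iic_self)).and hlt).exists
  exact hle.trans_lt ha

theorem lt_sub_of_forall_setIntegral_le (hv : Continuous v) {S : Set ℝ} {t₀ r : ℝ}
    (hS : S ∈ 𝓝 t₀) (hv₀ : v t₀ < 0)
    (h : ∀ B, MeasurableSet B → B ⊆ S → ∫ t in B, v t ∂p.measure ≤ ∫ t in B, v t ∂q.measure)
    (hlt : ∀ᶠ s in 𝓝[<] t₀, r < p s - q s) :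
    r < p t₀ - q t₀ := by
  obtain ⟨a, hle, ha⟩ := (((eventually_le_sub_of_forall_setIntegral_le p q hv hS hv₀ h).filter_mono
    (nhdsWithin_mono _ Iio_subset_Iic_self)).and hlt).exists
  exact ha.trans_le hle

end StieltjesFunction

theorem exists_first_eq_of_lt_of_le {f : ℝ → ℝ} {a b c : ℝ} (hab : a ≤ b)
    (hf : ContinuousOn f (Icc a b)) (ha : f a < c) (hb : c ≤ f b) :
    ∃ t ∈ Ioc a b, f t = c ∧ ∀ s ∈ Ico a t, f s < c := by
  set S := Icc a b ∩ f ⁻¹' Ici c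
  have hSne : S.Nonempty := ⟨b, right_mem_Icc.2 hab, hb⟩
  have hbdd : BddBelow S := ⟨a, fun s hs => hs.1.1⟩
  obtain ⟨⟨hat, htb⟩, hct⟩ : sInf S ∈ S :=
    (hf.preimage_isClosed_of_isClosed isClosed_Icc isClosed_Ici).csInf_mem hSne hbdd
  have hbefore : ∀ s ∈ Ico a (sInf S), f s < c := fun s hs => by
    by_contra! hcs
    exact (csInf_le hbdd ⟨⟨hs.1, hs.2.le.trans htb⟩, hcs⟩).not_gt hs.2
  have hat' : a < sInf S := hat.lt_of_ne fun h => (h ▸ ha).not_ge hct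
  refine ⟨sInf S, ⟨hat', htb⟩, le_antisymm ?_ hct, hbefore⟩
  by_contra! hlt
  obtain ⟨s, hs, hfs⟩ := intermediate_value_Ico hat (hf.mono (Icc_subset_Icc_right htb))
    ⟨ha.le, hlt⟩
  exact (hbefore s hs).ne hfs

theorem abs_lt_and_abs_lt_of_add_sub_sign {x y r : ℝ} (hr : 0 < r)
    (hy_lt : 0 < x + y → y < r) (hy_gt : x + y < 0 → -r < y)
    (hx_lt : 0 < x - y → x < r) (hx_gt : x - y < 0 → -r < x) :
    |x| < r ∧ |y| < r := by
  refine ⟨abs_lt.2 ⟨?_, ?_⟩, abs_lt.2 ⟨?_, ?_⟩⟩ <;> by_contra! h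
  · rcases lt_or_ge (x - y) 0 with hd | hd
    · linarith [hx_gt hd]
    · linarith [hy_gt (by linarith)]
  · rcases lt_or_ge 0 (x - y) with hd | hd
    · linarith [hx_lt hd]
    · linarith [hy_lt (by linarith)]
  · rcases lt_or_ge (x + y) 0 with hs | hs
    · linarith [hy_gt hs]
    · linarith [hx_lt (by linarith)]
  · rcases lt_or_ge 0 (x + y) with hs | hs
    · linarith [hy_lt hs]
    · linarith [hx_gt (by linarith)]

theorem critical_measure_inequalities_imply_zero
    (u : ℝ → Fin 2 → ℝ) (m mbar : Fin 2 → StieltjesFunction ℝ)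
    (hmc : ∀ j, Continuous (m j)) (hmbarc : ∀ j, Continuous (mbar j))
    (hdecomp : ∀ t, ∀ j, u t j = m j t - mbar j t)
    (hu0 : u 0 = 0)
    (h2 : ∀ B : Set ℝ, MeasurableSet B → B ⊆ Set.Ici 0 →
      (∫ t in B, (u t 0 + u t 1) ∂(m 1).measure)
        ≤ ∫ t in B, (u t 0 + u t 1) ∂(mbar 1).measure)
    (h1 : ∀ B : Set ℝ, MeasurableSet B → B ⊆ Set.Ici 0 →
      (∫ t in B, (u t 0 - u t 1) ∂(m 0).measure)
        ≤ ∫ t in B, (u t 0 - u t 1) ∂(mbar 0).measure) :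
    ∀ t ∈ Set.Ici (0:ℝ), u t = 0 := by
  intro T hT
  by_contra hne
  have hcoord : ∀ j, Continuous fun t => u t j := fun j =>
    ((hmc j).sub (hmbarc j)).congr fun t => (hdecomp t j).symm
  have hr : 0 < ‖u T‖ := norm_pos_iff.2 hne
  obtain ⟨t₀, ⟨ht₀, -⟩, hnorm, hbefore⟩ := exists_first_eq_of_lt_of_le hT
    (continuous_pi hcoord).norm.continuousOn (by rwa [hu0, norm_zero]) le_rfl
  set r := ‖u T‖
  have hbound : ∀ j (v : ℝ → ℝ), Continuous v →
      (∀ B, MeasurableSet B → B ⊆ Ici 0 →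
        ∫ t in B, v t ∂(m j).measure ≤ ∫ t in B, v t ∂(mbar j).measure) →
      (0 < v t₀ → u t₀ j < r) ∧ (v t₀ < 0 → -r < u t₀ j) := by
    intro j v hv h
    have hsmall : ∀ᶠ s in 𝓝[<] t₀, |m j s - mbar j s| < r :=
      mem_of_superset (Ico_mem_nhdsLT ht₀) fun s hs => by
        simpa only [mem_ofPred_eq, ← hdecomp, ← Real.norm_eq_abs]
          using (norm_le_pi_norm (u s) j).trans_lt (hbefore s hs)
    rw [hdecomp]
    exact ⟨fun hv₀ => (m j).sub_lt_of_forall_setIntegral_le (mbar j) hv (Ici_mem_nhds ht₀) hv₀ h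
        (hsmall.mono fun _ hs => (abs_lt.1 hs).2),
      fun hv₀ => (m j).lt_sub_of_forall_setIntegral_le (mbar j) hv (Ici_mem_nhds ht₀) hv₀ h
        (hsmall.mono fun _ hs => (abs_lt.1 hs).1)⟩
  obtain ⟨hy_lt, hy_gt⟩ := hbound 1 (fun t => u t 0 + u t 1) ((hcoord 0).add (hcoord 1)) h2
  obtain ⟨hx_lt, hx_gt⟩ := hbound 0 (fun t => u t 0 - u t 1) ((hcoord 0).sub (hcoord 1)) h1
  obtain ⟨hx, hy⟩ := abs_lt_and_abs_lt_of_add_sub_sign hr hy_lt hy_gt hx_lt hx_gt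
  refine hnorm.not_lt ((pi_norm_lt_iff hr).2 fun j => ?_)
  fin_cases j
  exacts [hx, hy]
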